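/- arXiv:1111.5634 — 5 statements merged into one kernel-verified Lean document; each statement's English description precedes it below -/
import Mathlib

section
/- There is a bijection between nonnegative integer sequences (b_1, ..., b_n) with b_1 ≤ r+1 and b_i ≤ r+1+b_{i-1} for 2 ≤ i ≤ n, and (r+2)-ary rooted plane trees with n+1 internal nodes. In particular, the number of such sequences equals (1/((r+1)(n+1)+1)) * binomial((r+2)(n+1), n+1). -/
/-!
Encode an `(r+2)`-ary tree by its preorder word, writing `true` for an internal node and `false`
for a leaf. With weights `r + 1` for `true` and `-1` for `false`, the words obtained are exactly
those of total weight `-1` all of whose proper prefixes have weight `≥ 0`; a tree with `m` internal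
nodes gives such a word of length `L = (r+2)m + 1` with `m` letters `true`.

By the cycle lemma, exactly one of the `L` rotations of a word of length `L` with `m` letters
`true` is a tree word: rotate at the first minimum of the prefix weights. So there are `C(L, m) / L`
trees with `m` internal nodes, which is the Fuss–Catalan number.

A tree word is determined by the positions `p₀ < ⋯ < p_n` of its letters `true`, and the prefix
condition says exactly `p_i ≤ (r+2)i`. The sequence is `b_i = (r+2)i - p_i`, the weight of the
prefix in front of the `i`-th internal node, and `p_{i-1} < p_i` becomes `b_i ≤ r + 1 + b_{i-1}`.
-/

/-- Rooted ordered `(r+2)`-ary trees: each internal node has exactly `r+2` ordered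
children, each leaf has none. -/
inductive AryTree (r : ℕ) : Type
  | leaf : AryTree r
  | node : (Fin (r + 2) → AryTree r) → AryTree r

/-- The number of internal nodes of an `(r+2)`-ary tree. -/
def AryTree.internals {r : ℕ} : AryTree r → ℕ
  | .leaf => 0
  | .node c => 1 + ∑ i : Fin (r + 2), (c i).internals

open Finset

lemma Nat.exists_first_argmin {α : Type*} [LinearOrder α] (f : ℕ → α) {L : ℕ}
    (hL : 0 < L) : ∃ k < L, (∀ i < L, f k ≤ f i) ∧ ∀ i < k, f k < f i := by
  classical
  obtain ⟨j, hj, hjmin⟩ := Finset.exists_min_image (Finset.range L) f ⟨0, by simpa⟩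
  have hex : ∃ k, k < L ∧ ∀ i < L, f k ≤ f i :=
    ⟨j, by simpa using hj, fun i hi => hjmin i (by simpa)⟩
  obtain ⟨hkL, hkmin⟩ := Nat.find_spec hex
  refine ⟨Nat.find hex, hkL, hkmin, fun i hi => ?_⟩
  obtain ⟨j, hj, hlt⟩ : ∃ j < L, f j < f i := by
    simpa [hi.trans hkL] using Nat.find_min hex hi
  exact (hkmin j hj).trans_lt hlt

lemma List.count_true_ofFn {L : ℕ} (f : Fin L → Bool) : (List.ofFn f).count true = #{i | f i} := by
  simpa using (Fin.card_filter_univ_eq_vector_get_eq_count true (List.Vector.ofFn f)).symm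

lemma List.ofFn_getD_eq {L : ℕ} {w : List Bool} (h : w.length = L) :
    List.ofFn (fun i : Fin L => w.getD i false) = w := by
  subst h; apply List.ext_getElem <;> simp

lemma Fin.card_filter_castLE {L t : ℕ} (h : t ≤ L) (P : Fin L → Prop) [DecidablePred P] :
    #{i : Fin t | P (Fin.castLE h i)} = #{i : Fin L | (i : ℕ) < t ∧ P i} := by
  rw [← Finset.card_map (Fin.castLEEmb h)]
  congr 1; ext i; simp only [mem_map, mem_filter, mem_univ, true_and, Fin.castLEEmb_apply]
  exact ⟨fun ⟨a, ha, hai⟩ => hai ▸ ⟨a.2, ha⟩, fun ⟨hi, hP⟩ => ⟨⟨i, hi⟩, hP, rfl⟩⟩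

lemma List.count_true_take {L : ℕ} {w : List Bool} (h : w.length = L) {t : ℕ} (ht : t ≤ L) :
    (w.take t).count true = #{i : Fin L | (i : ℕ) < t ∧ w.getD i false} := by
  rw [← List.ofFn_getD_eq (L := t) (w := w.take t) (by simp; omega), List.count_true_ofFn,
    ← Fin.card_filter_castLE ht]
  congr 1; ext i; simp

lemma Fin.forall_le_mul_iff_forall_le_mul_card {c m : ℕ} (p : Fin m ↪o Fin (c * m + 1)) :
    (∀ i, (p i : ℕ) ≤ c * i) ↔ ∀ t : Fin (c * m + 1), (t : ℕ) ≤ c * #{i | p i < t} := by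
  refine ⟨fun h t => ?_, fun h i => ?_⟩
  · set k := #{i | p i < t}
    rcases lt_or_ge k m with hk | hk
    · -- `{i | p i < t}` is an initial segment of `Fin m`, so it is `{i | i < k}` and `t ≤ p k`
      have hpk : t ≤ p ⟨k, hk⟩ := not_lt.1 fun hlt => lt_irrefl k
        ((Fin.lt_card_filter_univ_iff_apply_of_imp _ fun i j hji hi =>
          (p.monotone hji).trans_lt hi).2 hlt)
      exact (Fin.le_def.1 hpk).trans (h _)
    · exact (Nat.lt_succ_iff.1 t.2).trans (Nat.mul_le_mul_left c hk)
  · simpa only [p.lt_iff_lt, Finset.filter_gt_eq_Iio, Fin.card_Iio] using h (p i)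

namespace FussCatalan

def weight (r : ℕ) (w : List Bool) : ℤ := (r + 2) * w.count true - w.length

/- Reading `true` as an internal node and `false` as a leaf, these are the preorder words of
forests of `k` trees (Łukasiewicz words). -/
def IsForestWord (r k : ℕ) (w : List Bool) : Prop :=
  weight r w = -k ∧ ∀ t < w.length, -(k : ℤ) < weight r (w.take t)

abbrev IsTreeWord (r : ℕ) : List Bool → Prop := IsForestWord r 1

variable {r : ℕ}

@[simp] lemma weight_nil : weight r [] = 0 := by simp [weight]

@[simp] lemma weight_append (u v : List Bool) :
    weight r (u ++ v) = weight r u + weight r v := by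
  simp only [weight, List.count_append, List.length_append]; push_cast; ring

@[simp] lemma weight_cons (b : Bool) (w : List Bool) :
    weight r (b :: w) = weight r w + if b then (r : ℤ) + 1 else -1 := by
  cases b <;> simp [weight] <;> ring

@[simp] lemma weight_rotate (w : List Bool) (k : ℕ) : weight r (w.rotate k) = weight r w := by
  simp [weight, (List.rotate_perm w k).count_eq]

lemma weight_take_sub_one_le (w : List Bool) (t : ℕ) :
    weight r (w.take t) - 1 ≤ weight r (w.take (t + 1)) := by
  rw [List.take_add_one]
  cases w[t]? with
  | none => simp
  | some b => cases b <;> simp; linarith [(r.cast_nonneg : (0 : ℤ) ≤ r)]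

lemma IsForestWord.length_eq {k : ℕ} {w : List Bool} (h : IsForestWord r k w) :
    w.length = (r + 2) * w.count true + k := by
  have hw := h.1
  unfold weight at hw
  zify; linarith

lemma isForestWord_zero_iff {w : List Bool} : IsForestWord r 0 w ↔ w = [] := by
  refine ⟨fun h => List.eq_nil_of_length_eq_zero ?_, fun h => by simp [h, IsForestWord]⟩
  by_contra hw
  simpa using h.2 0 (by omega)

lemma IsForestWord.append {j k : ℕ} {u v : List Bool} (hu : IsForestWord r j u)
    (hv : IsForestWord r k v) : IsForestWord r (j + k) (u ++ v) := by
  refine ⟨by simp [hu.1, hv.1, add_comm], fun t ht => ?_⟩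
  rw [List.take_append, weight_append]
  rcases lt_or_ge t u.length with htu | htu
  · simp [Nat.sub_eq_zero_of_le htu.le]; linarith [hu.2 t htu]
  · rw [List.take_of_length_le htu, hu.1]
    have := hv.2 (t - u.length) (by simp at ht; omega)
    push_cast; linarith

lemma IsForestWord.exists_isTreeWord_append {k : ℕ} {w : List Bool}
    (h : IsForestWord r (k + 1) w) : ∃ u v, IsTreeWord r u ∧ IsForestWord r k v ∧ w = u ++ v := by
  classical
  -- the first tree ends where the prefix weight first becomes negative
  have hex : ∃ t, weight r (w.take t) < 0 := ⟨w.length, by simp [h.1]; omega⟩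
  set t := Nat.find hex
  have hmin : ∀ s < t, 0 ≤ weight r (w.take s) := fun s hs => not_lt.1 (Nat.find_min hex hs)
  have htw : t ≤ w.length := Nat.find_min' hex (by simp [h.1]; omega)
  have hu : weight r (w.take t) = -1 := by
    have hneg : weight r (w.take t) < 0 := Nat.find_spec hex
    have ht : t ≠ 0 := by rintro h0; simp [h0] at hneg
    have hstep := weight_take_sub_one_le (r := r) w (t - 1)
    rw [Nat.sub_add_cancel (Nat.pos_of_ne_zero ht)] at hstep
    linarith [hmin (t - 1) (by omega)]
  refine ⟨w.take t, w.drop t, ⟨hu, fun s hs => ?_⟩, ⟨?_, fun s hs => ?_⟩,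
    (List.take_append_drop t w).symm⟩
  · simp only [List.take_take, List.length_take] at hs ⊢
    rw [min_eq_left (by omega)]
    push_cast; linarith [hmin s (by omega)]
  · have := congrArg (weight r) (List.take_append_drop t w)
    rw [weight_append, h.1, hu] at this
    push_cast at this; linarith
  · have := h.2 (t + s) (by simp at hs; omega)
    rw [List.take_add, weight_append, hu] at this
    push_cast at this; linarith

lemma IsTreeWord.eq_of_prefix {u v : List Bool} (hu : IsTreeWord r u) (hv : IsTreeWord r v)
    (h : u <+: v) : u = v := by
  by_contra hne
  have hlt : u.length < v.length :=
    lt_of_le_of_ne h.length_le fun hl => hne (h.eq_of_length hl)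
  have := hv.2 u.length hlt
  rw [← List.prefix_iff_eq_take.1 h, hu.1] at this
  simp at this

lemma IsTreeWord.eq_of_append_eq {u u' v v' : List Bool} (hu : IsTreeWord r u)
    (hu' : IsTreeWord r u') (h : u ++ v = u' ++ v') : u = u' := by
  have h₁ : u <+: u' ++ v' := h ▸ List.prefix_append u v
  have h₂ : u' <+: u' ++ v' := List.prefix_append u' v'
  rcases le_total u.length u'.length with hl | hl
  · exact hu.eq_of_prefix hu' (List.prefix_of_prefix_length_le h₁ h₂ hl)
  · exact (hu'.eq_of_prefix hu (List.prefix_of_prefix_length_le h₂ h₁ hl)).symm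

lemma isForestWord_iff_exists_flatten {k : ℕ} {w : List Bool} :
    IsForestWord r k w ↔
      ∃ us : Fin k → List Bool, (∀ i, IsTreeWord r (us i)) ∧ w = (List.ofFn us).flatten := by
  induction k generalizing w with
  | zero => simp [isForestWord_zero_iff]
  | succ k ih =>
    constructor
    · intro h
      obtain ⟨u, v, hu, hv, rfl⟩ := h.exists_isTreeWord_append
      obtain ⟨us, hus, rfl⟩ := ih.1 hv
      exact ⟨Fin.cons u us, Fin.cases hu hus, by simp [List.ofFn_succ]⟩
    · rintro ⟨us, hus, rfl⟩
      rw [List.ofFn_succ, List.flatten_cons]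
      simpa only [add_comm] using (hus 0).append (ih.2 ⟨_, fun i => hus i.succ, rfl⟩)

lemma eq_of_flatten_ofFn_eq {k : ℕ} {us us' : Fin k → List Bool} (hus : ∀ i, IsTreeWord r (us i))
    (hus' : ∀ i, IsTreeWord r (us' i)) (h : (List.ofFn us).flatten = (List.ofFn us').flatten) :
    us = us' := by
  induction k with
  | zero => exact Subsingleton.elim _ _
  | succ k ih =>
    simp only [List.ofFn_succ, List.flatten_cons] at h
    have h₀ := (hus 0).eq_of_append_eq (hus' 0) h
    rw [h₀, List.append_cancel_left_eq] at h
    have hsucc := ih (fun i => hus i.succ) (fun i => hus' i.succ) h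
    exact funext fun i => Fin.cases h₀ (congrFun hsucc) i

lemma isTreeWord_cons_true_iff {w : List Bool} :
    IsTreeWord r (true :: w) ↔ IsForestWord r (r + 2) w := by
  simp only [IsForestWord, weight_cons, List.length_cons, Nat.forall_lt_succ_left,
    List.take_zero, List.take_succ_cons, weight_nil]
  push_cast
  refine and_congr (by constructor <;> intro h <;> linarith) ?_
  simp only [true_and]
  exact forall₂_congr fun t _ => by constructor <;> intro h <;> linarith

lemma isTreeWord_cons_false_iff {w : List Bool} : IsTreeWord r (false :: w) ↔ w = [] := by
  refine ⟨fun h => ?_, by rintro rfl; simp [IsForestWord]⟩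
  by_contra hw
  simpa using h.2 1 (by simpa using List.length_pos_iff.2 hw)

-- The last term is the part of the prefix that wraps around; `k + t - w.length` truncates to `0`
-- when there is none.
lemma weight_take_rotate (w : List Bool) {k t : ℕ} (hk : k ≤ w.length) (ht : t ≤ w.length) :
    weight r ((w.rotate k).take t) =
      weight r (w.take (k + t)) - weight r (w.take k) + weight r (w.take (k + t - w.length)) := by
  rw [List.rotate_eq_drop_append_take hk, List.take_append, weight_append, List.take_take,
    List.length_drop, List.take_add, weight_append,
    show min (t - (w.length - k)) k = k + t - w.length by omega]
  ring

lemma exists_isTreeWord_rotate {w : List Bool} (hw : weight r w = -1) :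
    ∃ k < w.length, IsTreeWord r (w.rotate k) := by
  have hL : 0 < w.length := List.length_pos_iff.2 (by rintro rfl; simp at hw)
  obtain ⟨k, hkL, hmin, hfirst⟩ :=
    Nat.exists_first_argmin (fun j => weight r (w.take j)) hL
  refine ⟨k, hkL, by simp [hw], fun t ht => ?_⟩
  rw [List.length_rotate] at ht
  rw [weight_take_rotate w hkL.le ht.le]
  rcases lt_or_ge (k + t) w.length with h | h
  · rw [Nat.sub_eq_zero_of_le h.le, List.take_zero, weight_nil]
    push_cast; linarith [hmin _ h]
  · rw [List.take_of_length_le h, hw]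
    push_cast; linarith [hfirst (k + t - w.length) (by omega)]

lemma IsTreeWord.eq_zero_of_isTreeWord_rotate {w : List Bool} (hw : IsTreeWord r w) {k : ℕ}
    (hk : k < w.length) (hwk : IsTreeWord r (w.rotate k)) : k = 0 := by
  by_contra hk0
  have h₁ := hwk.2 (w.length - k) (by simp; omega)
  have h₂ := hw.2 k hk
  rw [weight_take_rotate w hk.le (by omega), show k + (w.length - k) = w.length by omega,
    List.take_length, Nat.sub_self, List.take_zero, weight_nil, hw.1] at h₁
  push_cast at h₁ h₂; linarith

lemma IsTreeWord.eq_of_rotate_eq {v v' : List Bool} (hv : IsTreeWord r v) (hv' : IsTreeWord r v')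
    {k k' : ℕ} (hk : k < v.length) (hk' : k' < v'.length) (h : v.rotate k = v'.rotate k') :
    v = v' ∧ k = k' := by
  wlog hle : k ≤ k' generalizing v v' k k'
  · exact (this hv' hv hk' hk h.symm (by omega)).imp Eq.symm Eq.symm
  have hvv' : v = v'.rotate (k' - k) := by
    rw [← List.rotate_eq_rotate (n := k), h, List.rotate_rotate, Nat.sub_add_cancel hle]
  have := hv'.eq_zero_of_isTreeWord_rotate (by omega) (hvv' ▸ hv)
  exact ⟨by simpa [this] using hvv', by omega⟩

abbrev BoolWords (L m : ℕ) := {w : List Bool // w.length = L ∧ w.count true = m}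

abbrev TreeWords (r m : ℕ) := {w : BoolWords ((r + 2) * m + 1) m // IsTreeWord r w.1}

lemma weight_eq_neg_one {m : ℕ} (w : BoolWords ((r + 2) * m + 1) m) : weight r w.1 = -1 := by
  simp only [weight, w.2.1, w.2.2]; push_cast; ring

def BoolWords.rotate {L m : ℕ} (w : BoolWords L m) (k : ℕ) : BoolWords L m :=
  ⟨w.1.rotate k, by simp [w.2.1], by simp [(List.rotate_perm _ _).count_eq, w.2.2]⟩

lemma bijective_rotate (m : ℕ) :
    Function.Bijective fun x : TreeWords r m × Fin ((r + 2) * m + 1) => x.1.1.rotate x.2 := by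
  refine ⟨fun ⟨⟨v, hv⟩, k⟩ ⟨⟨v', hv'⟩, k'⟩ h => ?_, fun w => ?_⟩
  · obtain ⟨hvv', hkk'⟩ := hv.eq_of_rotate_eq hv' (by rw [v.2.1]; exact k.2)
      (by rw [v'.2.1]; exact k'.2) (congrArg Subtype.val h)
    simp only [Prod.mk.injEq, Subtype.ext_iff]
    exact ⟨hvv', Fin.ext hkk'⟩
  · obtain ⟨k, hk, hwk⟩ := exists_isTreeWord_rotate (weight_eq_neg_one (r := r) w)
    obtain ⟨w, hwL, hwc⟩ := w
    refine ⟨(⟨BoolWords.rotate ⟨w, hwL, hwc⟩ k, hwk⟩,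
      ⟨((r + 2) * m + 1 - k) % ((r + 2) * m + 1), Nat.mod_lt _ (by omega)⟩), Subtype.ext ?_⟩
    show (w.rotate k).rotate (((r + 2) * m + 1 - k) % ((r + 2) * m + 1)) = w
    rw [← hwL, ← List.length_rotate w k, List.rotate_mod, List.length_rotate, List.rotate_rotate,
      Nat.add_sub_cancel' hk.le, List.rotate_length]

noncomputable def rotateEquiv (r m : ℕ) :
    TreeWords r m × Fin ((r + 2) * m + 1) ≃ BoolWords ((r + 2) * m + 1) m :=
  Equiv.ofBijective _ (bijective_rotate m)

def BoolWords.equivPowersetCard (L m : ℕ) : BoolWords L m ≃ Set.powersetCard (Fin L) m where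
  toFun w := ⟨({i | w.1.getD i false} : Finset (Fin L)), by
    rw [Set.powersetCard.mem_iff, ← List.count_true_ofFn, List.ofFn_getD_eq w.2.1, w.2.2]⟩
  invFun s := ⟨List.ofFn fun i => decide (i ∈ s.1), by simp, by
    rw [List.count_true_ofFn]; simp⟩
  left_inv w := by ext1; simpa using List.ofFn_getD_eq w.2.1
  right_inv s := by ext i; simp

noncomputable def BoolWords.equivOrderEmb (L m : ℕ) : BoolWords L m ≃ (Fin m ↪o Fin L) :=
  (equivPowersetCard L m).trans Set.powersetCard.ofFinEmbEquiv.symm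

lemma BoolWords.mem_range_equivOrderEmb {L m : ℕ} (w : BoolWords L m) (j : Fin L) :
    j ∈ Set.range (equivOrderEmb L m w) ↔ w.1.getD j false := by
  rw [equivOrderEmb, Equiv.trans_apply, Set.powersetCard.mem_range_ofFinEmbEquiv_symm_iff_mem,
    ← Set.powersetCard.mem_coe_iff]
  simp [equivPowersetCard]

lemma BoolWords.count_true_take {L m : ℕ} (w : BoolWords L m) (t : Fin L) :
    (w.1.take t).count true = #{i | equivOrderEmb L m w i < t} := by
  rw [List.count_true_take w.2.1 t.2.le, ← card_map (equivOrderEmb L m w).toEmbedding]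
  congr 1; ext j
  simp only [mem_filter, mem_univ, true_and, mem_map, ← w.mem_range_equivOrderEmb]
  constructor
  · rintro ⟨hjt, a, rfl⟩
    exact ⟨a, hjt, rfl⟩
  · rintro ⟨a, hat, rfl⟩
    exact ⟨hat, a, rfl⟩

lemma isTreeWord_iff_forall_le {m : ℕ} (w : BoolWords ((r + 2) * m + 1) m) :
    IsTreeWord r w.1 ↔ ∀ i, (BoolWords.equivOrderEmb _ m w i : ℕ) ≤ (r + 2) * i := by
  rw [Fin.forall_le_mul_iff_forall_le_mul_card]
  simp only [IsForestWord, weight_eq_neg_one w, Nat.cast_one, true_and, w.2.1, Fin.forall_iff]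
  refine forall₂_congr fun t ht => ?_
  rw [← w.count_true_take ⟨t, ht⟩]
  simp only [weight, List.length_take, w.2.1, min_eq_left ht.le]
  rw [← Nat.cast_le (α := ℤ)]
  push_cast
  omega

noncomputable def treeWordsEquiv (r m : ℕ) :
    TreeWords r m ≃ {p : Fin m ↪o Fin ((r + 2) * m + 1) // ∀ i, (p i : ℕ) ≤ (r + 2) * i} :=
  (BoolWords.equivOrderEmb _ m).subtypeEquiv isTreeWord_iff_forall_le

lemma card_boolWords (L m : ℕ) : Nat.card (BoolWords L m) = L.choose m := by
  rw [Nat.card_congr (BoolWords.equivPowersetCard L m), Set.powersetCard.card, Nat.card_fin]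

lemma card_treeWords (r m : ℕ) :
    (Nat.card (TreeWords r m) : ℚ) = ((r + 2) * m).choose m / ((r + 1) * m + 1) := by
  have hrot := Nat.card_congr (rotateEquiv r m)
  rw [Nat.card_prod, Nat.card_fin, card_boolWords] at hrot
  have hsucc := Nat.choose_mul_succ_eq ((r + 2) * m) m
  have hsub : (r + 2) * m + 1 - m = (r + 1) * m + 1 := by
    have : (r + 2) * m = (r + 1) * m + m := by ring
    omega
  rw [← hrot, hsub] at hsucc
  have key : ((r + 2) * m).choose m = Nat.card (TreeWords r m) * ((r + 1) * m + 1) :=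
    Nat.eq_of_mul_eq_mul_right (by positivity : 0 < (r + 2) * m + 1) (hsucc.trans (by ring))
  rw [eq_div_iff (by positivity)]
  exact_mod_cast key.symm

end FussCatalan

namespace AryTree
open FussCatalan

variable {r : ℕ}

def toWord : AryTree r → List Bool
  | .leaf => [false]
  | .node c => true :: (List.ofFn fun i => (c i).toWord).flatten

lemma count_true_toWord (t : AryTree r) : t.toWord.count true = t.internals := by
  induction t with
  | leaf => rfl
  | node c ih =>
    simp only [toWord, internals, List.count_cons_self, List.count_flatten, List.map_ofFn,
      Function.comp_def, ih, List.sum_ofFn]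
    ring

lemma isTreeWord_toWord (t : AryTree r) : IsTreeWord r t.toWord := by
  induction t with
  | leaf => exact isTreeWord_cons_false_iff.2 rfl
  | node c ih => exact isTreeWord_cons_true_iff.2 (isForestWord_iff_exists_flatten.2 ⟨_, ih, rfl⟩)

lemma toWord_injective : Function.Injective (toWord (r := r)) := by
  intro t t' h
  induction t generalizing t' with
  | leaf => cases t' <;> simp_all [toWord]
  | node c ih =>
    cases t' with
    | leaf => simp [toWord] at h
    | node c' =>
      simp only [toWord, List.cons.injEq, true_and] at h
      have := eq_of_flatten_ofFn_eq (fun i => isTreeWord_toWord (c i))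
        (fun i => isTreeWord_toWord (c' i)) h
      exact congrArg node (funext fun i => ih i (congrFun this i))

lemma exists_toWord_eq {w : List Bool} (hw : IsTreeWord r w) : ∃ t : AryTree r, t.toWord = w := by
  induction hn : w.length using Nat.strong_induction_on generalizing w with
  | _ n ih =>
  match w, hw with
  | [], hw => simp [IsForestWord] at hw
  | false :: _, hw => exact ⟨.leaf, by rw [isTreeWord_cons_false_iff.1 hw]; rfl⟩
  | true :: _, hw =>
    obtain ⟨us, hus, rfl⟩ := isForestWord_iff_exists_flatten.1 (isTreeWord_cons_true_iff.1 hw)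
    have hlt (i : Fin (r + 2)) : (us i).length < n := by
      have := (List.sublist_flatten_of_mem (L := List.ofFn us) (List.mem_ofFn.2 ⟨i, rfl⟩)).length_le
      simp only [List.length_cons] at hn ⊢; omega
    choose c hc using fun i => ih _ (hlt i) (hus i) rfl
    exact ⟨.node c, by simp [toWord, hc]⟩

noncomputable def equivTreeWords (r m : ℕ) : {t : AryTree r // t.internals = m} ≃ TreeWords r m :=
  Equiv.ofBijective
    (fun t => ⟨⟨t.1.toWord, by rw [(isTreeWord_toWord t.1).length_eq, count_true_toWord, t.2],
      by rw [count_true_toWord, t.2]⟩, isTreeWord_toWord t.1⟩)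
    ⟨fun t t' h => Subtype.ext (toWord_injective (congrArg (fun w => w.1.1) h)), fun w => by
      obtain ⟨t, ht⟩ := exists_toWord_eq w.2
      exact ⟨⟨t, by rw [← count_true_toWord, ht, w.1.2.2]⟩, Subtype.ext (Subtype.ext ht)⟩⟩

end AryTree

namespace FussCatalan

def IsFussSeq (r n : ℕ) (b : ℕ → ℕ) : Prop :=
  (∀ i, i = 0 ∨ n < i → b i = 0) ∧ b 1 ≤ r + 1 ∧ (∀ i, 2 ≤ i → i ≤ n → b i ≤ r + 1 + b (i - 1))

variable {r n : ℕ} {b : ℕ → ℕ}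

lemma IsFussSeq.succ_le (hb : IsFussSeq r n b) {i : ℕ} (hi : i < n) : b (i + 1) ≤ r + 1 + b i := by
  rcases i with _ | i
  · simpa [hb.1 0 (Or.inl rfl)] using hb.2.1
  · simpa using hb.2.2 (i + 2) (by omega) (by omega)

lemma IsFussSeq.le_mul (hb : IsFussSeq r n b) : ∀ {i}, i ≤ n → b i ≤ (r + 1) * i
  | 0, _ => by simp [hb.1 0 (Or.inl rfl)]
  | i + 1, hi => by
    have := hb.succ_le (i := i) (by omega)
    have := hb.le_mul (i := i) (by omega)
    rw [mul_add_one]; omega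

def IsFussSeq.toOrderEmb (hb : IsFussSeq r n b) : Fin (n + 1) ↪o Fin ((r + 2) * (n + 1) + 1) :=
  OrderEmbedding.ofStrictMono
    (fun i => ⟨(r + 2) * i - b i,
      Nat.lt_succ_of_le ((Nat.sub_le _ _).trans (Nat.mul_le_mul_left _ i.2.le))⟩)
    (Fin.strictMono_iff_lt_succ.2 fun i => by
      have := hb.succ_le i.2
      have := hb.le_mul (i := i) i.2.le
      have : (r + 1) * i ≤ (r + 2) * i := Nat.mul_le_mul_right _ (by omega)
      simp only [Fin.lt_def, Fin.val_castSucc, Fin.val_succ, mul_add_one]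
      omega)

def seqOfOrderEmb (p : Fin (n + 1) ↪o Fin ((r + 2) * (n + 1) + 1)) (i : ℕ) : ℕ :=
  if h : i ≤ n then (r + 2) * i - p ⟨i, by omega⟩ else 0

lemma isFussSeq_seqOfOrderEmb {p : Fin (n + 1) ↪o Fin ((r + 2) * (n + 1) + 1)}
    (hp : ∀ i, (p i : ℕ) ≤ (r + 2) * i) : IsFussSeq r n (seqOfOrderEmb p) := by
  refine ⟨fun i hi => ?_, ?_, fun i hi hin => ?_⟩
  · rcases hi with rfl | hi
    · simp [seqOfOrderEmb]
    · simp [seqOfOrderEmb, hi.not_ge]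
  · unfold seqOfOrderEmb
    split_ifs with h
    · have := p.strictMono (show (0 : Fin (n + 1)) < ⟨1, by omega⟩ from Fin.mk_lt_mk.2 one_pos)
      rw [Fin.lt_def] at this
      omega
    · omega
  · have hlt := p.strictMono (show (⟨i - 1, by omega⟩ : Fin (n + 1)) < ⟨i, by omega⟩ from
      Fin.mk_lt_mk.2 (by omega))
    have hle := hp ⟨i - 1, by omega⟩
    rw [Fin.lt_def] at hlt
    simp only [seqOfOrderEmb, dif_pos hin, dif_pos (show i - 1 ≤ n by omega)]
    have : (r + 2) * i = (r + 2) * (i - 1) + (r + 2) := by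
      rw [← mul_add_one]; congr 1; omega
    omega

def seqEquiv (r n : ℕ) : {b // IsFussSeq r n b} ≃
    {p : Fin (n + 1) ↪o Fin ((r + 2) * (n + 1) + 1) // ∀ i, (p i : ℕ) ≤ (r + 2) * i} where
  toFun b := ⟨b.2.toOrderEmb, fun _ => Nat.sub_le _ _⟩
  invFun p := ⟨seqOfOrderEmb p.1, isFussSeq_seqOfOrderEmb p.2⟩
  left_inv b := by
    ext i
    simp only [seqOfOrderEmb, IsFussSeq.toOrderEmb, OrderEmbedding.coe_ofStrictMono]
    split_ifs with h
    · have := b.2.le_mul h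
      have : (r + 1) * i ≤ (r + 2) * i := Nat.mul_le_mul_right _ (by omega)
      omega
    · exact (b.2.1 i (Or.inr (by omega))).symm
  right_inv p := by
    ext i
    simp only [IsFussSeq.toOrderEmb, OrderEmbedding.coe_ofStrictMono, seqOfOrderEmb,
      dif_pos (Nat.lt_succ_iff.1 i.2), Fin.eta]
    have := p.2 i
    omega

end FussCatalan

theorem stmt2_general (r n : ℕ) :
    Nonempty (
      ({b : ℕ → ℕ |
        (∀ i, i = 0 ∨ n < i → b i = 0) ∧
        b 1 ≤ r + 1 ∧
        (∀ i, 2 ≤ i → i ≤ n → b i ≤ r + 1 + b (i - 1))} : Set (ℕ → ℕ)) ≃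
      {t : AryTree r | t.internals = n + 1}) ∧
    (({b : ℕ → ℕ |
        (∀ i, i = 0 ∨ n < i → b i = 0) ∧
        b 1 ≤ r + 1 ∧
        (∀ i, 2 ≤ i → i ≤ n → b i ≤ r + 1 + b (i - 1))}.ncard : ℚ)
      = (Nat.choose ((r + 2) * (n + 1)) (n + 1) : ℚ) / ((r + 1) * (n + 1) + 1)) := by
  have e : {b // FussCatalan.IsFussSeq r n b} ≃ FussCatalan.TreeWords r (n + 1) :=
    (FussCatalan.seqEquiv r n).trans (FussCatalan.treeWordsEquiv r (n + 1)).symm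
  refine ⟨⟨e.trans (AryTree.equivTreeWords r (n + 1)).symm⟩, ?_⟩
  rw [← Nat.card_coe_set_eq]
  calc (Nat.card {b // FussCatalan.IsFussSeq r n b} : ℚ)
      = Nat.card (FussCatalan.TreeWords r (n + 1)) := by rw [Nat.card_congr e]
    _ = _ := by rw [FussCatalan.card_treeWords]; push_cast; ring

/-- There is a bijection between nonnegative integer sequences
`(b_1, …, b_n)` with `b_1 ≤ r+1` and `b_i ≤ r+1+b_{i-1}` for `2 ≤ i ≤ n`, and
`(r+2)`-ary rooted plane trees with `n+1` internal nodes; in particular the number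
of such sequences is the Fuss–Catalan number
`(1/((r+1)(n+1)+1)) * C((r+2)(n+1), n+1)`. -/
theorem stmt2 (r n : ℕ) (hn : 1 ≤ n) :
    Nonempty (
      ({b : ℕ → ℕ |
        (∀ i, i = 0 ∨ n < i → b i = 0) ∧
        b 1 ≤ r + 1 ∧
        (∀ i, 2 ≤ i → i ≤ n → b i ≤ r + 1 + b (i - 1))} : Set (ℕ → ℕ)) ≃
      {t : AryTree r | t.internals = n + 1}) ∧
    (({b : ℕ → ℕ |
        (∀ i, i = 0 ∨ n < i → b i = 0) ∧
        b 1 ≤ r + 1 ∧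
        (∀ i, 2 ≤ i → i ≤ n → b i ≤ r + 1 + b (i - 1))}.ncard : ℚ)
      = (Nat.choose ((r + 2) * (n + 1)) (n + 1) : ℚ) / ((r + 1) * (n + 1) + 1)) :=
  stmt2_general r n
end

section
/- The number of nonnegative integer sequences (b_1, ..., b_n) satisfying b_1 ≤ r+1 and b_i ≤ r+1+b_{i-1} for 2 ≤ i ≤ n equals the Fuss–Catalan number (1/((r+1)(n+1)+1)) * binomial((r+2)(n+1), n+1). -/
/-!
Put `m = r + 1`, `N = n + 1` and `K = (m + 1) N + 1`. A sequence `b` corresponds to the word of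
length `K` with up-steps `+m` at the positions `e_i = (m + 1) i - b_i` (`i < N`) and down-steps
`-1` elsewhere: the constraints on `b` say exactly that the `e_i` increase, and `b_i ≥ 0` says that
the path is nonnegative just before its `i`-th up-step, hence on every proper prefix. Every word
with `N` up-steps has total sum `-1`, so by the cycle lemma exactly one of its `K` rotations has
nonnegative proper prefix sums. Hence there are `C(K, N) / K = C((m + 1) N, N) / (m N + 1)` good
words.
-/

open Finset
open scoped Fin.NatCast

theorem existsUnique_le_on_window {K : ℕ} (hK : 0 < K) (H : ℕ → ℤ)
    (hH : ∀ t, H (t + K) = H t - 1) :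
    ∃! c, c < K ∧ ∀ t < K, H c ≤ H (c + t) := by
  have hmin : ∃ c, c < K ∧ ∀ u < K, H c ≤ H u := by
    obtain ⟨c, hc, h⟩ := (range K).exists_min_image H ⟨0, mem_range.2 hK⟩
    exact ⟨c, mem_range.1 hc, fun u hu => h u (mem_range.2 hu)⟩
  -- the base point is the first minimiser of `H` on `[0, K)`
  obtain ⟨c, ⟨hcK, hcmin⟩, hfirst⟩ : ∃ c, (c < K ∧ ∀ u < K, H c ≤ H u) ∧ ∀ u < c, H c < H u :=
    ⟨Nat.find hmin, Nat.find_spec hmin, fun u hu => by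
      have := Nat.find_min hmin hu
      push Not at this
      obtain ⟨v, hvK, hv⟩ := this (hu.trans (Nat.find_spec hmin).1)
      exact ((Nat.find_spec hmin).2 v hvK).trans_lt hv⟩
  have not_both : ∀ c c', c < c' → c' < K → (∀ t < K, H c ≤ H (c + t)) →
      ¬ ∀ t < K, H c' ≤ H (c' + t) := fun c c' hcc' hc'K hc hc' => by
    have h1 := hc (c' - c) (by omega)
    have h2 := hc' (c + K - c') (by omega)
    rw [Nat.add_sub_cancel' hcc'.le] at h1
    rw [Nat.add_sub_cancel' (by omega), hH] at h2
    omega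
  have hgood : ∀ t < K, H c ≤ H (c + t) := fun t ht => by
    rcases Nat.lt_or_ge (c + t) K with h | h
    · exact hcmin _ h
    · have := hfirst (c + t - K) (by omega)
      rw [← Nat.sub_add_cancel h, hH]
      omega
  refine ⟨c, ⟨hcK, hgood⟩, fun c' ⟨hc'K, hc'good⟩ => ?_⟩
  rcases lt_trichotomy c' c with h | h | h
  · exact (not_both _ _ h hcK hc'good hgood).elim
  · exact h
  · exact (not_both _ _ h hc'K hgood hc'good).elim

section CycleLemma

variable {K : ℕ} [NeZero K]

def PrefixSumsNonneg (w : Fin K → ℤ) : Prop :=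
  ∀ t < K, 0 ≤ ∑ j ∈ range t, w j

instance : DecidablePred (PrefixSumsNonneg (K := K)) := fun _ => by
  unfold PrefixSumsNonneg; infer_instance

theorem sum_range_add_period {M : Type*} [AddCommMonoid M] (w : Fin K → M) (t : ℕ) :
    ∑ j ∈ range (t + K), w j = ∑ j ∈ range t, w j + ∑ i, w i := by
  rw [sum_range_add, ← Equiv.sum_comp (Equiv.addLeft (t : Fin K)) w, sum_range (n := K)]
  simp

theorem sum_range_rotate {M : Type*} [AddCommGroup M] (w : Fin K → M) (c : Fin K) (t : ℕ) :
    ∑ j ∈ range t, w (j + c) = ∑ j ∈ range (c + t), w j - ∑ j ∈ range c, w j := by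
  rw [sum_range_add]
  simp [add_comm]

/-- The cycle lemma of Dvoretzky and Motzkin. -/
theorem existsUnique_prefixSumsNonneg_rotate (w : Fin K → ℤ) (hw : ∑ i, w i = -1) :
    ∃! c : Fin K, PrefixSumsNonneg fun j => w (j + c) := by
  set H : ℕ → ℤ := fun t => ∑ j ∈ range t, w j
  have hrot : ∀ c : Fin K, PrefixSumsNonneg (fun j => w (j + c)) ↔ ∀ t < K, H c ≤ H (c + t) :=
    fun c => forall₂_congr fun t _ => by rw [sum_range_rotate, sub_nonneg]
  obtain ⟨c, ⟨hcK, hc⟩, huniq⟩ :=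
    existsUnique_le_on_window (NeZero.pos K) H fun t => by
      simp only [H, sum_range_add_period, hw, sub_eq_add_neg]
  refine ⟨⟨c, hcK⟩, (hrot _).2 hc, fun c' hc' => Fin.ext (huniq c' ⟨c'.isLt, (hrot c').1 hc'⟩)⟩

theorem card_filter_prefixSumsNonneg_mul (S : Finset (Fin K → ℤ))
    (hrot : ∀ w ∈ S, ∀ c, (fun j => w (j + c)) ∈ S) (hsum : ∀ w ∈ S, ∑ i, w i = -1) :
    #{w ∈ S | PrefixSumsNonneg w} * K = #S := by
  have hone : ∀ w ∈ S, #{c | PrefixSumsNonneg fun j => w (j + c)} = 1 := fun w hw =>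
    card_eq_one_iff_existsUnique.2 <| by
      simpa using existsUnique_prefixSumsNonneg_rotate w (hsum w hw)
  have hshift : ∀ c : Fin K,
      #{w ∈ S | PrefixSumsNonneg fun j => w (j + c)} = #{w ∈ S | PrefixSumsNonneg w} := fun c =>
    card_nbij' (fun w j => w (j + c)) (fun w j => w (j - c))
      (fun w hw => by simp_all) (fun w hw => by simp_all [sub_eq_add_neg])
      (fun w _ => by simp) (fun w _ => by simp)
  calc #{w ∈ S | PrefixSumsNonneg w} * K
      = ∑ c : Fin K, #{w ∈ S | PrefixSumsNonneg fun j => w (j + c)} := by simp [hshift, mul_comm]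
    _ = ∑ w ∈ S, #{c | PrefixSumsNonneg fun j => w (j + c)} := by
      simp only [card_filter]; exact sum_comm
    _ = #S := by rw [sum_congr rfl hone, card_eq_sum_ones]

end CycleLemma

section Paths

variable (m : ℕ) {K : ℕ}

def pathStep (A : Finset (Fin K)) (x : Fin K) : ℤ := if x ∈ A then m else -1

theorem pathStep_injective : Function.Injective (pathStep m (K := K)) := fun A B h => by
  ext x
  have := congrFun h x
  by_cases hA : x ∈ A <;> by_cases hB : x ∈ B <;> simp_all [pathStep]

theorem pathStep_rotate [NeZero K] (A : Finset (Fin K)) (c : Fin K) :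
    (fun j => pathStep m A (j + c)) = pathStep m (A.map (Equiv.subRight c).toEmbedding) := by
  ext j
  simp [pathStep]

theorem sum_pathStep_comp {ι : Type*} (A : Finset (Fin K)) (s : Finset ι) (f : ι → Fin K) :
    ∑ i ∈ s, pathStep m A (f i) = (m + 1) * #{i ∈ s | f i ∈ A} - #s := by
  have h : ∀ x, pathStep m A x = (m + 1) * (if x ∈ A then 1 else 0) - 1 := fun x => by
    unfold pathStep; split_ifs <;> ring
  simp only [h, sum_sub_distrib, ← mul_sum, sum_boole, sum_const, nsmul_eq_mul, mul_one]

theorem sum_pathStep (A : Finset (Fin K)) : ∑ i, pathStep m A i = (m + 1) * #A - K := by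
  simpa using sum_pathStep_comp m A univ id

theorem sum_range_pathStep [NeZero K] (A : Finset (Fin K)) {t : ℕ} (ht : t ≤ K) :
    ∑ j ∈ range t, pathStep m A j = (m + 1) * #{a ∈ A | a.val < t} - t := by
  rw [sum_pathStep_comp, card_range]
  congr 3
  have hval : ∀ j < t, ((j : Fin K) : ℕ) = j := fun j hj => Fin.val_cast_of_lt (by omega)
  refine card_nbij' (fun j => (j : Fin K)) Fin.val (fun j hj => ?_) (fun a ha => ?_)
    (fun j hj => ?_) (fun a _ => Fin.cast_val_eq_self a)
  · simp only [coe_filter, mem_range, Set.mem_ofPred_eq] at hj ⊢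
    exact ⟨hj.2, (hval j hj.1).symm ▸ hj.1⟩
  · simp only [coe_filter, mem_range, Set.mem_ofPred_eq] at ha ⊢
    exact ⟨ha.2, by rw [Fin.cast_val_eq_self]; exact ha.1⟩
  · simp only [coe_filter, mem_range, Set.mem_ofPred_eq] at hj
    exact hval j hj.1

theorem card_filter_prefixSumsNonneg_pathStep (N : ℕ) :
    #{A ∈ powersetCard N (univ : Finset (Fin ((m + 1) * N + 1))) |
      PrefixSumsNonneg (pathStep m A)} * ((m + 1) * N + 1) = ((m + 1) * N + 1).choose N := by
  have h := card_filter_prefixSumsNonneg_mul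
    ((powersetCard N (univ : Finset (Fin ((m + 1) * N + 1)))).image (pathStep m))
    (by
      simp only [mem_image, mem_powersetCard_univ, forall_exists_index, and_imp]
      rintro _ A hA rfl c
      exact ⟨_, by simpa using hA, (pathStep_rotate m A c).symm⟩)
    (by
      simp only [mem_image, mem_powersetCard_univ, forall_exists_index, and_imp]
      rintro _ A hA rfl
      rw [sum_pathStep, hA]
      push_cast
      ring)
  rwa [filter_image, card_image_of_injective _ (pathStep_injective m),
    card_image_of_injective _ (pathStep_injective m), card_powersetCard, card_univ,
    Fintype.card_fin] at h

theorem card_filter_prefixSumsNonneg_pathStep_mul (N : ℕ) :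
    #{A ∈ powersetCard N (univ : Finset (Fin ((m + 1) * N + 1))) |
      PrefixSumsNonneg (pathStep m A)} * (m * N + 1) = ((m + 1) * N).choose N := by
  have h := Nat.choose_mul_succ_eq ((m + 1) * N) N
  rw [← card_filter_prefixSumsNonneg_pathStep, show (m + 1) * N + 1 - N = m * N + 1 by
    rw [add_mul]; omega] at h
  exact Nat.eq_of_mul_eq_mul_right (by positivity : 0 < (m + 1) * N + 1) (by rw [h]; ring)

theorem prefixSumsNonneg_pathStep_map_iff {N : ℕ} (e : Fin N ↪o Fin ((m + 1) * N + 1)) :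
    PrefixSumsNonneg (pathStep m (univ.map e.toEmbedding)) ↔ ∀ i, (e i : ℕ) ≤ (m + 1) * i := by
  have hsum : ∀ t ≤ (m + 1) * N + 1, ∑ j ∈ range t, pathStep m (univ.map e.toEmbedding) j
      = (m + 1) * #{i | (e i : ℕ) < t} - t := fun t ht => by
    rw [sum_range_pathStep m _ ht, filter_map, card_map]
    rfl
  have hrank : ∀ i, #{k | (e k : ℕ) < e i} = i := fun i => by
    rw [← Fin.card_Iio i]
    congr 1
    ext k
    simp
  constructor
  · intro h i
    have := h (e i) (e i).isLt
    rw [hsum _ (e i).isLt.le, hrank] at this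
    exact_mod_cast (by linarith : ((e i : ℕ) : ℤ) ≤ (m + 1) * i)
  · intro h t ht
    rw [hsum t ht.le, sub_nonneg]
    set c := #{i | (e i : ℕ) < t}
    have hcN : c ≤ N := (card_filter_le _ _).trans_eq (by simp)
    suffices t ≤ (m + 1) * c by exact_mod_cast this
    rcases hcN.lt_or_eq with hc | hc
    · have hte : t ≤ e ⟨c, hc⟩ := by
        by_contra! hlt
        have : Iic (⟨c, hc⟩ : Fin N) ⊆ ({i | (e i : ℕ) < t} : Finset (Fin N)) := fun k hk => by
          simp only [mem_filter, mem_univ, true_and]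
          exact lt_of_le_of_lt (e.monotone (mem_Iic.1 hk)) hlt
        have hcard := card_le_card this
        rw [Fin.card_Iic] at hcard
        exact Nat.not_succ_le_self c hcard
      exact hte.trans (h _)
    · rw [hc]
      omega

end Paths

def jumpBoundedSeqs (m n : ℕ) : Set (ℕ → ℕ) :=
  {b | (∀ i, i = 0 ∨ n < i → b i = 0) ∧ b 1 ≤ m ∧ ∀ i, 2 ≤ i → i ≤ n → b i ≤ m + b (i - 1)}

namespace jumpBoundedSeqs

variable {m n : ℕ} {b : ℕ → ℕ}

theorem mem_iff : b ∈ jumpBoundedSeqs m n ↔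
    (∀ i, i = 0 ∨ n < i → b i = 0) ∧ ∀ i < n, b (i + 1) ≤ m + b i := by
  refine ⟨fun ⟨hzero, hone, hstep⟩ => ⟨hzero, fun i hi => ?_⟩,
    fun ⟨hzero, hstep⟩ => ⟨hzero, ?_, fun i hi2 hin => ?_⟩⟩
  · rcases i with _ | i
    · simpa [hzero 0 (Or.inl rfl)] using hone
    · simpa using hstep (i + 2) (by omega) (by omega)
  · rcases n.eq_zero_or_pos with rfl | hn
    · simp [hzero 1 (Or.inr one_pos)]
    · simpa [hzero 0 (Or.inl rfl)] using hstep 0 hn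
  · simpa [Nat.sub_add_cancel (by omega : 1 ≤ i)] using hstep (i - 1) (by omega)

theorem apply_le_mul (hb : b ∈ jumpBoundedSeqs m n) (i : ℕ) : b i ≤ m * i := by
  obtain ⟨hzero, hstep⟩ := mem_iff.1 hb
  induction i with
  | zero => simp [hzero 0 (Or.inl rfl)]
  | succ i ih =>
    rcases Nat.lt_or_ge i n with hi | hi
    · have := hstep i hi
      rw [mul_add_one]
      omega
    · simp [hzero (i + 1) (Or.inr (by omega))]

def upSteps (hb : b ∈ jumpBoundedSeqs m n) : Fin (n + 1) ↪o Fin ((m + 1) * (n + 1) + 1) :=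
  OrderEmbedding.ofStrictMono
    (fun i => ⟨(m + 1) * i - b i, by
      have := Nat.mul_le_mul_left (m + 1) (Nat.lt_succ_iff.1 i.isLt)
      rw [mul_add_one]
      omega⟩)
    (Fin.strictMono_iff_lt_succ.2 fun i => by
      have hstep := (mem_iff.1 hb).2 i i.isLt
      have hle := apply_le_mul hb i
      have := add_one_mul m (i : ℕ)
      simp only [Fin.lt_def, Fin.val_castSucc, Fin.val_succ, mul_add_one]
      omega)

theorem upSteps_apply (hb : b ∈ jumpBoundedSeqs m n) (i : Fin (n + 1)) :
    (upSteps hb i : ℕ) = (m + 1) * i - b i := rfl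

def ofUpSteps (e : Fin (n + 1) ↪o Fin ((m + 1) * (n + 1) + 1)) (i : ℕ) : ℕ :=
  if h : i < n + 1 then (m + 1) * i - e ⟨i, h⟩ else 0

theorem ofUpSteps_mem {e : Fin (n + 1) ↪o Fin ((m + 1) * (n + 1) + 1)}
    (he : ∀ i, (e i : ℕ) ≤ (m + 1) * i) : ofUpSteps e ∈ jumpBoundedSeqs m n := by
  refine mem_iff.2 ⟨fun i hi => ?_, fun i hi => ?_⟩
  · rcases hi with rfl | hi
    · simp [ofUpSteps]
    · simp [ofUpSteps, show ¬ i < n + 1 by omega]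
  · have hlt : e ⟨i, by omega⟩ < e ⟨i + 1, by omega⟩ :=
      e.lt_iff_lt.2 (Fin.mk_lt_mk.2 i.lt_succ_self)
    have := he ⟨i, by omega⟩
    simp only [ofUpSteps, dif_pos (by omega : i < n + 1), dif_pos (by omega : i + 1 < n + 1),
      mul_add_one]
    rw [Fin.lt_def] at hlt
    omega

def equivUpSteps (m n : ℕ) : jumpBoundedSeqs m n ≃
    {e : Fin (n + 1) ↪o Fin ((m + 1) * (n + 1) + 1) // ∀ i, (e i : ℕ) ≤ (m + 1) * i} where
  toFun b := ⟨upSteps b.2, fun i => Nat.sub_le _ _⟩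
  invFun e := ⟨ofUpSteps e.1, ofUpSteps_mem e.2⟩
  left_inv b := by
    ext i
    simp only [ofUpSteps]
    split_ifs with h
    · have := apply_le_mul b.2 i
      simp only [upSteps_apply, add_one_mul]
      omega
    · exact ((mem_iff.1 b.2).1 i (Or.inr (by omega))).symm
  right_inv e := by
    ext i
    simp only [upSteps_apply, ofUpSteps, dif_pos i.isLt, Fin.eta]
    have := e.2 i
    omega

end jumpBoundedSeqs

theorem ncard_jumpBoundedSeqs (m n : ℕ) : (jumpBoundedSeqs m n).ncard =
    #{A ∈ powersetCard (n + 1) (univ : Finset (Fin ((m + 1) * (n + 1) + 1))) |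
      PrefixSumsNonneg (pathStep m A)} := by
  rw [← Nat.card_coe_set_eq, Nat.card_congr ((jumpBoundedSeqs.equivUpSteps m n).trans
    (Set.powersetCard.ofFinEmbEquiv.subtypeEquiv (q := fun A => PrefixSumsNonneg (pathStep m A.1))
      fun e => (prefixSumsNonneg_pathStep_map_iff m e).symm)),
    Nat.card_congr (Equiv.subtypeSubtypeEquivSubtypeInter (· ∈ Set.powersetCard _ (n + 1))
      fun A => PrefixSumsNonneg (pathStep m A)), ← Set.ncard_coe_finset,
    ← Nat.card_coe_set_eq]
  congr
  ext A
  simp [Set.powersetCard.mem_iff]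

theorem stmt3_general (r n : ℕ) :
    ({b : ℕ → ℕ |
        (∀ i, i = 0 ∨ n < i → b i = 0) ∧
        b 1 ≤ r + 1 ∧
        (∀ i, 2 ≤ i → i ≤ n → b i ≤ r + 1 + b (i - 1))}.ncard : ℚ)
      = (Nat.choose ((r + 2) * (n + 1)) (n + 1) : ℚ) / ((r + 1) * (n + 1) + 1) := by
  have h := card_filter_prefixSumsNonneg_pathStep_mul (r + 1) (n + 1)
  rw [← ncard_jumpBoundedSeqs] at h
  rw [eq_div_iff (by positivity)]
  exact_mod_cast h

/-- The number of nonnegative integer sequences `(b_1, …, b_n)` with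
`b_1 ≤ r+1` and `b_i ≤ r+1+b_{i-1}` for `2 ≤ i ≤ n` equals the Fuss–Catalan number
`(1/((r+1)(n+1)+1)) * C((r+2)(n+1), n+1)`. -/
theorem stmt3 (r n : ℕ) (hn : 1 ≤ n) :
    ({b : ℕ → ℕ |
        (∀ i, i = 0 ∨ n < i → b i = 0) ∧
        b 1 ≤ r + 1 ∧
        (∀ i, 2 ≤ i → i ≤ n → b i ≤ r + 1 + b (i - 1))}.ncard : ℚ)
      = (Nat.choose ((r + 2) * (n + 1)) (n + 1) : ℚ) / ((r + 1) * (n + 1) + 1) :=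
  stmt3_general r n
end

section
/- There is a bijection between (A) triangular arrays (a_{i,j}) of nonnegative integers with rows satisfying a_{n,i} ≤ a_{n-1,i} ≤ ... ≤ a_{i+1,i} ≤ binomial(i+1, 2) + i*m − sum_{k=1}^{i-1} a_{i,k} for all i ∈ [n-1], and (B) triangular arrays (b_{i,j}) of nonnegative integers satisfying b_{n,i} + b_{n-1,i} + ... + b_{i+1,i} ≤ m + i + sum_{k=1}^{i-1} b_{i,k} for all i ∈ [n-1]. -/
/-!
Complete row `i` of an array of type (A) by the diagonal entry
`a i i = C(i+1,2) + i*m - ∑_{k<i} a i k`, so that row `i` sums to `C(i+1,2) + i*m`, and let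
`b j i = a (j-1) i - a j i` be the successive drops down column `i`. The chain condition says
exactly that these drops are nonnegative; the column sums of `b` telescope to `a i i - a n i`,
and since consecutive row totals differ by `m + i`, the diagonal entry is `m + i + ∑_{k<i} b i k`.
So the column condition of (B) is `a n i ≥ 0`. Conversely `a j i` is recovered from `b` as
`m + i + ∑_{k<i} b i k - ∑_{i<l≤j} b l i`.
-/

open Finset

lemma Finset.sum_Icc_succ_tsub_of_antitoneOn {M : Type*} [AddCommMonoid M] [PartialOrder M]
    [Sub M] [OrderedSub M] [AddLeftMono M] [AddLeftReflectLE M] [ExistsAddOfLE M]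
    {f : ℕ → M} {a b : ℕ} (hab : a ≤ b) (hf : AntitoneOn f (Set.Icc a b)) :
    ∑ l ∈ Icc (a + 1) b, (f (l - 1) - f l) = f a - f b := by
  induction b, hab using Nat.le_induction with
  | base => rw [Icc_eq_empty (by omega), sum_empty, tsub_eq_of_eq_add (zero_add _).symm]
  | succ b hab ih =>
    have hb : f (b + 1) ≤ f b := hf ⟨hab, by omega⟩ ⟨by omega, le_rfl⟩ (by omega)
    have ha : f b ≤ f a := hf ⟨le_rfl, by omega⟩ ⟨hab, by omega⟩ hab
    rw [sum_Icc_succ_top (by omega), ih (hf.mono (Set.Icc_subset_Icc_right (by omega))),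
      Nat.add_sub_cancel, tsub_add_tsub_cancel ha hb]

namespace TriangularArray

def IsSupported (n : ℕ) (f : ℕ → ℕ → ℕ) : Prop :=
  ∀ i j, ¬(1 ≤ j ∧ j + 1 ≤ i ∧ i ≤ n) → f i j = 0

def rowBound (m i : ℕ) : ℕ := (i + 1).choose 2 + i * m

def rowSum (f : ℕ → ℕ → ℕ) (i : ℕ) : ℕ := ∑ k ∈ Icc 1 (i - 1), f i k

def colSum (f : ℕ → ℕ → ℕ) (i j : ℕ) : ℕ := ∑ l ∈ Icc (i + 1) j, f l i

def colBound (m : ℕ) (b : ℕ → ℕ → ℕ) (i : ℕ) : ℕ := m + i + rowSum b i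

def IsChainArray (m n : ℕ) (a : ℕ → ℕ → ℕ) : Prop :=
  ∀ i, 1 ≤ i → i ≤ n - 1 →
    (∀ l, i + 1 ≤ l → l ≤ n - 1 → a (l + 1) i ≤ a l i) ∧
      a (i + 1) i + rowSum a i ≤ rowBound m i

def IsSumArray (m n : ℕ) (b : ℕ → ℕ → ℕ) : Prop :=
  ∀ i, 1 ≤ i → i ≤ n - 1 → colSum b i n ≤ colBound m b i

def withDiag (m : ℕ) (a : ℕ → ℕ → ℕ) (j i : ℕ) : ℕ :=
  if j = i then rowBound m i - rowSum a i else a j i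

def toSumArray (m n : ℕ) (a : ℕ → ℕ → ℕ) (j i : ℕ) : ℕ :=
  if 1 ≤ i ∧ i + 1 ≤ j ∧ j ≤ n then withDiag m a (j - 1) i - withDiag m a j i else 0

def toChainArray (m n : ℕ) (b : ℕ → ℕ → ℕ) (j i : ℕ) : ℕ :=
  if 1 ≤ i ∧ i + 1 ≤ j ∧ j ≤ n then colBound m b i - colSum b i j else 0

lemma rowBound_succ (m i : ℕ) : rowBound m (i + 1) = rowBound m i + (m + (i + 1)) := by
  simp only [rowBound, Nat.choose_succ_succ (i + 1), Nat.choose_one_right]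
  ring

lemma isSupported_toSumArray (m n : ℕ) (a : ℕ → ℕ → ℕ) :
    IsSupported n (toSumArray m n a) :=
  fun _ _ h => if_neg h

lemma isSupported_toChainArray (m n : ℕ) (b : ℕ → ℕ → ℕ) :
    IsSupported n (toChainArray m n b) :=
  fun _ _ h => if_neg h

section ChainArray

variable {m n : ℕ} {a : ℕ → ℕ → ℕ} (ha : IsChainArray m n a)
include ha

lemma withDiag_antitoneOn {i : ℕ} (hi : 1 ≤ i) (hin : i ≤ n - 1) :
    AntitoneOn (withDiag m a · i) (Set.Icc i n) := by
  refine antitoneOn_of_add_one_le Set.ordConnected_Icc ?_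
  rintro l - ⟨hil, -⟩ ⟨-, hln⟩
  obtain ⟨hchain, hdiag⟩ := ha i hi hin
  rw [withDiag, if_neg (by omega : l + 1 ≠ i), withDiag]
  rcases hil.eq_or_lt with rfl | hlt
  · rw [if_pos rfl]
    omega
  · rw [if_neg hlt.ne']
    exact hchain l hlt (by omega)

lemma colSum_toSumArray {i j : ℕ} (hi : 1 ≤ i) (hin : i ≤ n - 1) (hij : i ≤ j)
    (hjn : j ≤ n) :
    colSum (toSumArray m n a) i j = withDiag m a i i - withDiag m a j i := by
  rw [colSum, ← sum_Icc_succ_tsub_of_antitoneOn hij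
    ((withDiag_antitoneOn ha hi hin).mono (Set.Icc_subset_Icc_right hjn))]
  refine sum_congr rfl fun l hl => ?_
  rw [mem_Icc] at hl
  exact if_pos ⟨hi, hl.1, by omega⟩

lemma sum_withDiag_row {r : ℕ} (hr : r ≤ n - 1) :
    ∑ k ∈ Icc 1 r, withDiag m a r k = rowBound m r := by
  rcases Nat.eq_zero_or_pos r with rfl | hr0
  · simp [rowBound]
  have hrow : ∑ k ∈ Icc 1 (r - 1), withDiag m a r k = rowSum a r :=
    sum_congr rfl fun k hk => if_neg (by rw [mem_Icc] at hk; omega)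
  have hdiag := (ha r hr0 hr).2
  rw [← Nat.sub_add_cancel hr0, sum_Icc_succ_top (by omega), Nat.sub_add_cancel hr0, hrow,
    withDiag, if_pos rfl]
  omega

lemma colBound_toSumArray {i : ℕ} (hi : 1 ≤ i) (hin : i ≤ n - 1) :
    colBound m (toSumArray m n a) i = withDiag m a i i := by
  obtain ⟨s, rfl⟩ : ∃ s, i = s + 1 := ⟨i - 1, by omega⟩
  have hdrop : ∀ k ∈ Icc 1 s, withDiag m a (s + 1) k ≤ withDiag m a s k := fun k hk => by
    rw [mem_Icc] at hk
    exact withDiag_antitoneOn ha hk.1 (by omega) ⟨hk.2, by omega⟩ ⟨by omega, by omega⟩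
      (by omega)
  have hrow : ∑ k ∈ Icc 1 s, withDiag m a (s + 1) k = rowSum a (s + 1) :=
    sum_congr rfl fun k hk => if_neg (by rw [mem_Icc] at hk; omega)
  have hrowSum : rowSum (toSumArray m n a) (s + 1) = rowBound m s - rowSum a (s + 1) := by
    rw [← sum_withDiag_row ha (by omega : s ≤ n - 1), ← hrow, ← sum_tsub_distrib _ hdrop]
    refine sum_congr rfl fun k hk => ?_
    rw [mem_Icc] at hk
    exact if_pos ⟨hk.1, by omega, by omega⟩
  have hle : rowSum a (s + 1) ≤ rowBound m s := by
    rw [← sum_withDiag_row ha (by omega : s ≤ n - 1), ← hrow]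
    exact sum_le_sum hdrop
  rw [colBound, hrowSum, withDiag, if_pos rfl, rowBound_succ]
  omega

lemma isSumArray_toSumArray : IsSumArray m n (toSumArray m n a) := fun i hi hin => by
  rw [colSum_toSumArray ha hi hin (by omega) (by omega), colBound_toSumArray ha hi hin]
  exact Nat.sub_le _ _

lemma toChainArray_toSumArray (ha0 : IsSupported n a) :
    toChainArray m n (toSumArray m n a) = a := by
  funext j i
  by_cases h : 1 ≤ i ∧ i + 1 ≤ j ∧ j ≤ n
  · obtain ⟨hi, hij, hjn⟩ := h
    have hin : i ≤ n - 1 := by omega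
    have hmono : withDiag m a j i ≤ withDiag m a i i :=
      withDiag_antitoneOn ha hi hin ⟨le_rfl, by omega⟩ ⟨by omega, hjn⟩ (by omega)
    rw [toChainArray, if_pos ⟨hi, hij, hjn⟩, colSum_toSumArray ha hi hin (by omega) hjn,
      colBound_toSumArray ha hi hin, Nat.sub_sub_self hmono, withDiag, if_neg (by omega)]
  · rw [toChainArray, if_neg h, ha0 j i h]

end ChainArray

section SumArray

variable {m n : ℕ} {b : ℕ → ℕ → ℕ}

lemma colSum_self (b : ℕ → ℕ → ℕ) (i : ℕ) : colSum b i i = 0 :=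
  sum_eq_zero fun l hl => by rw [mem_Icc] at hl; omega

lemma colSum_mono (b : ℕ → ℕ → ℕ) (i : ℕ) : Monotone (colSum b i) := fun _ _ h =>
  sum_le_sum_of_subset (Icc_subset_Icc_right h)

lemma colSum_succ {i j : ℕ} (hij : i ≤ j) : colSum b i (j + 1) = colSum b i j + b (j + 1) i :=
  sum_Icc_succ_top (by omega) _

variable (hb : IsSumArray m n b)
include hb

lemma colSum_le_colBound {i j : ℕ} (hi : 1 ≤ i) (hin : i ≤ n - 1) (hjn : j ≤ n) :
    colSum b i j ≤ colBound m b i :=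
  (colSum_mono b i hjn).trans (hb i hi hin)

lemma rowSum_toChainArray_succ {i : ℕ} (hi : 1 ≤ i) (hin : i + 1 ≤ n - 1) :
    rowSum (toChainArray m n b) (i + 1) + rowSum b (i + 1) =
      rowSum (toChainArray m n b) i + colBound m b i := by
  have hentry : ∀ k ∈ Icc 1 i, toChainArray m n b (i + 1) k + b (i + 1) k =
      colBound m b k - colSum b k i := fun k hk => by
    rw [mem_Icc] at hk
    have hle := colSum_le_colBound hb hk.1 (by omega) (by omega : i + 1 ≤ n)
    rw [colSum_succ hk.2] at hle
    rw [toChainArray, if_pos ⟨hk.1, by omega, by omega⟩, colSum_succ hk.2]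
    omega
  have hprev : rowSum (toChainArray m n b) i =
      ∑ k ∈ Icc 1 (i - 1), (colBound m b k - colSum b k i) :=
    sum_congr rfl fun k hk => by
      rw [mem_Icc] at hk
      exact if_pos ⟨hk.1, by omega, by omega⟩
  rw [rowSum, rowSum, Nat.add_sub_cancel, ← sum_add_distrib, sum_congr rfl hentry, hprev,
    ← Nat.sub_add_cancel hi, sum_Icc_succ_top (by omega), Nat.sub_add_cancel hi, colSum_self,
    Nat.sub_zero]

lemma rowSum_toChainArray_add_colBound {i : ℕ} (hi : 1 ≤ i) (hin : i ≤ n - 1) :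
    rowSum (toChainArray m n b) i + colBound m b i = rowBound m i := by
  induction i, hi using Nat.le_induction with
  | base => simp [rowSum, colBound, rowBound, add_comm]
  | succ i hi ih =>
    have hsucc := rowSum_toChainArray_succ hb hi hin
    rw [rowBound_succ, ← ih (by omega)]
    simp only [colBound] at hsucc ⊢
    omega

lemma isChainArray_toChainArray : IsChainArray m n (toChainArray m n b) := fun i hi hin => by
  refine ⟨fun l hl hln => ?_, ?_⟩
  · rw [toChainArray, if_pos ⟨hi, by omega, by omega⟩, toChainArray,
      if_pos ⟨hi, hl, by omega⟩]
    exact Nat.sub_le_sub_left (colSum_mono b i (Nat.le_succ l)) _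
  · have hsum := rowSum_toChainArray_add_colBound hb hi hin
    rw [toChainArray, if_pos ⟨hi, le_rfl, by omega⟩]
    omega

lemma toSumArray_toChainArray (hb0 : IsSupported n b) :
    toSumArray m n (toChainArray m n b) = b := by
  funext j i
  by_cases h : 1 ≤ i ∧ i + 1 ≤ j ∧ j ≤ n
  · obtain ⟨hi, hij, hjn⟩ := h
    have hin : i ≤ n - 1 := by omega
    have hcol : ∀ l, i ≤ l → l ≤ n → withDiag m (toChainArray m n b) l i =
        colBound m b i - colSum b i l := fun l hil hln => by
      rcases hil.eq_or_lt with rfl | hlt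
      · have hsum := rowSum_toChainArray_add_colBound hb hi hin
        rw [withDiag, if_pos rfl, colSum_self]
        omega
      · rw [withDiag, if_neg hlt.ne', toChainArray, if_pos ⟨hi, hlt, hln⟩]
    obtain ⟨t, rfl⟩ : ∃ t, j = t + 1 := ⟨j - 1, by omega⟩
    have hle := colSum_le_colBound hb hi hin hjn
    rw [colSum_succ (by omega)] at hle
    rw [toSumArray, if_pos ⟨hi, hij, hjn⟩, Nat.add_sub_cancel, hcol t (by omega) (by omega),
      hcol (t + 1) (by omega) hjn, colSum_succ (by omega)]
    omega
  · rw [toSumArray, if_neg h, hb0 j i h]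

end SumArray

def equiv (m n : ℕ) :
    {a // IsSupported n a ∧ IsChainArray m n a} ≃
      {b // IsSupported n b ∧ IsSumArray m n b} where
  toFun a := ⟨toSumArray m n a.1, isSupported_toSumArray m n a.1, isSumArray_toSumArray a.2.2⟩
  invFun b :=
    ⟨toChainArray m n b.1, isSupported_toChainArray m n b.1, isChainArray_toChainArray b.2.2⟩
  left_inv a := Subtype.ext (toChainArray_toSumArray a.2.2 a.2.1)
  right_inv b := Subtype.ext (toSumArray_toChainArray b.2.2 b.2.1)

end TriangularArray

theorem stmt6_general (m n : ℕ) :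
    Nonempty (
      ({a : ℕ → ℕ → ℕ |
        (∀ i j, ¬(1 ≤ j ∧ j + 1 ≤ i ∧ i ≤ n) → a i j = 0) ∧
        (∀ i, 1 ≤ i → i ≤ n - 1 →
          ((∀ l, i + 1 ≤ l → l ≤ n - 1 → a (l + 1) i ≤ a l i) ∧
           a (i + 1) i + ∑ k ∈ Finset.Icc 1 (i - 1), a i k ≤
             Nat.choose (i + 1) 2 + i * m))} : Set (ℕ → ℕ → ℕ)) ≃
      {b : ℕ → ℕ → ℕ |
        (∀ i j, ¬(1 ≤ j ∧ j + 1 ≤ i ∧ i ≤ n) → b i j = 0) ∧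
        (∀ i, 1 ≤ i → i ≤ n - 1 →
          (∑ l ∈ Finset.Icc (i + 1) n, b l i) ≤
            m + i + ∑ k ∈ Finset.Icc 1 (i - 1), b i k)}) :=
  ⟨TriangularArray.equiv m n⟩

/-- For `m ≥ 0`, `n ≥ 2`, there is a bijection between
(A) triangular arrays `(a_{i,j})` of nonnegative integers (entries for `1 ≤ j ≤ n-1`,
`j+1 ≤ i ≤ n`) whose rows satisfy
`a_{n,i} ≤ a_{n-1,i} ≤ ⋯ ≤ a_{i+1,i} ≤ C(i+1,2) + i*m − ∑_{k=1}^{i-1} a_{i,k}`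
for all `i ∈ [n-1]` (the last inequality is written additively to avoid truncated
subtraction), and
(B) triangular arrays `(b_{i,j})` of nonnegative integers satisfying
`b_{n,i} + ⋯ + b_{i+1,i} ≤ m + i + ∑_{k=1}^{i-1} b_{i,k}` for all `i ∈ [n-1]`. -/
theorem stmt6 (m n : ℕ) (hn : 2 ≤ n) :
    Nonempty (
      ({a : ℕ → ℕ → ℕ |
        (∀ i j, ¬(1 ≤ j ∧ j + 1 ≤ i ∧ i ≤ n) → a i j = 0) ∧
        (∀ i, 1 ≤ i → i ≤ n - 1 →
          ((∀ l, i + 1 ≤ l → l ≤ n - 1 → a (l + 1) i ≤ a l i) ∧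
           a (i + 1) i + ∑ k ∈ Finset.Icc 1 (i - 1), a i k ≤
             Nat.choose (i + 1) 2 + i * m))} : Set (ℕ → ℕ → ℕ)) ≃
      {b : ℕ → ℕ → ℕ |
        (∀ i j, ¬(1 ≤ j ∧ j + 1 ≤ i ∧ i ≤ n) → b i j = 0) ∧
        (∀ i, 1 ≤ i → i ≤ n - 1 →
          (∑ l ∈ Finset.Icc (i + 1) n, b l i) ≤
            m + i + ∑ k ∈ Finset.Icc 1 (i - 1), b i k)}) :=
  stmt6_general m n
end

section
/- Let G be the graph on vertex set [3] with c_1 parallel edges (1,2) and c_2 parallel edges (2,3), where c_1, c_2 ≥ 1. For each i ∈ {0, 1, ..., c_1}, the number of ways to choose a composition data realizing indegree sequence (i, c_1+c_2−i) in the reduction process equals binomial(c_1+c_2−1−i, c_2−1); equivalently, sum_{i=0}^{c_1} binomial(c_1+c_2−1−i, c_2−1) counts all leaves of the reduction tree of G. -/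
/-!
Every leaf of the reduction tree of the graph with `x` edges `(1,2)`, `y` edges `(2,3)` and
`z` edges `(1,3)` has indegree sequence `(i, x + y + z - i)` with `i ≤ x`, so leaves may be
counted by `indeg(2) = i` alone. Those counts obey Pascal's rule along the recursion, which
gives `C(x + y - 1 - i, y - 1)`, and summing them over `i ≤ x` counts all leaves.
-/

/-- The multiset of indegree sequences `(indeg(2), indeg(3))` of the leaves of a
reduction tree of the graph on `[3]` with `x` edges `(1,2)`, `y` edges `(2,3)` and
`z` edges `(1,3)`.  A reduction on a pair `(1,2),(2,3)` produces one child where the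
edge `(2,3)` is replaced by `(1,3)` and one where `(1,2)` is replaced by `(1,3)`;
leaves are the graphs with no such pair, i.e. `x = 0` or `y = 0`. -/
def leafSeqs : ℕ → ℕ → ℕ → Multiset (ℕ × ℕ)
  | 0, y, z => {(0, y + z)}
  | x + 1, 0, z => {(x + 1, z)}
  | x + 1, y + 1, z => leafSeqs (x + 1) y (z + 1) + leafSeqs x (y + 1) (z + 1)
  termination_by x y _ => x + y

theorem Multiset.count_map_fst_eq_count_of_fst_add_snd {M : Multiset (ℕ × ℕ)} {n : ℕ}
    (hM : ∀ p ∈ M, p.1 + p.2 = n) (i : ℕ) : (M.map Prod.fst).count i = M.count (i, n - i) := by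
  rw [Multiset.count_map, Multiset.count_eq_card_filter_eq]
  congr 1
  refine Multiset.filter_congr fun p hp => ?_
  have := hM p hp
  constructor
  · rintro rfl
    exact Prod.ext rfl (by dsimp only; omega)
  · rintro rfl
    rfl

lemma fst_add_snd_of_mem_leafSeqs {x y z : ℕ} {p : ℕ × ℕ} (hp : p ∈ leafSeqs x y z) :
    p.1 + p.2 = x + y + z := by
  induction x, y, z using leafSeqs.induct with
  | case1 y z => simp_all [leafSeqs]
  | case2 x z => simp_all [leafSeqs]
  | case3 x y z ih₁ ih₂ =>
    rw [leafSeqs, Multiset.mem_add] at hp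
    rcases hp with hp | hp
    · have := ih₁ hp; omega
    · have := ih₂ hp; omega

lemma fst_le_of_mem_leafSeqs {x y z : ℕ} {p : ℕ × ℕ} (hp : p ∈ leafSeqs x y z) : p.1 ≤ x := by
  induction x, y, z using leafSeqs.induct with
  | case1 y z => simp_all [leafSeqs]
  | case2 x z => simp_all [leafSeqs]
  | case3 x y z ih₁ ih₂ =>
    rw [leafSeqs, Multiset.mem_add] at hp
    exact hp.elim ih₁ fun hp => (ih₂ hp).trans x.le_succ

lemma count_map_fst_leafSeqs_of_lt {x y z i : ℕ} (hi : x < i) :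
    ((leafSeqs x y z).map Prod.fst).count i = 0 := by
  simp only [Multiset.count_eq_zero, Multiset.mem_map, not_exists, not_and]
  intro p hp h
  have := fst_le_of_mem_leafSeqs hp
  omega

lemma count_map_fst_leafSeqs_self (x y z : ℕ) : ((leafSeqs x y z).map Prod.fst).count x = 1 := by
  induction x, y, z using leafSeqs.induct with
  | case1 y z => simp [leafSeqs]
  | case2 x z => simp [leafSeqs]
  | case3 x y z ih₁ ih₂ =>
    rw [leafSeqs, Multiset.map_add, Multiset.count_add, ih₁,
      count_map_fst_leafSeqs_of_lt x.lt_succ_self]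

lemma leafSeqs_zero_right (x z : ℕ) : leafSeqs x 0 z = {(x, z)} := by
  cases x <;> simp [leafSeqs]

lemma count_map_fst_leafSeqs {x i : ℕ} (hi : i ≤ x) (y z : ℕ) :
    ((leafSeqs x (y + 1) z).map Prod.fst).count i = (x + y - i).choose y := by
  induction x generalizing y z with
  | zero => simp [Nat.le_zero.mp hi, leafSeqs]
  | succ x ihx =>
    rcases hi.eq_or_lt with rfl | hi
    · simp [count_map_fst_leafSeqs_self]
    · rw [Nat.lt_succ_iff] at hi
      induction y generalizing z with
      | zero =>
        rw [leafSeqs, leafSeqs_zero_right, Multiset.map_add, Multiset.count_add, ihx hi]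
        simp [show i ≠ x + 1 by omega]
      | succ y ihy =>
        rw [leafSeqs, Multiset.map_add, Multiset.count_add, ihy, ihx hi,
          show x + 1 + (y + 1) - i = (x + y - i) + 1 + 1 by omega,
          show x + 1 + y - i = (x + y - i) + 1 by omega,
          show x + (y + 1) - i = (x + y - i) + 1 by omega,
          Nat.choose_succ_succ' (x + y - i + 1) y]

theorem stmt14_general (c1 c2 : ℕ) (h2 : 1 ≤ c2) :
    (∀ i ≤ c1, (leafSeqs c1 c2 0).count (i, c1 + c2 - i)
      = Nat.choose (c1 + c2 - 1 - i) (c2 - 1)) ∧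
    Multiset.card (leafSeqs c1 c2 0)
      = ∑ i ∈ Finset.range (c1 + 1), Nat.choose (c1 + c2 - 1 - i) (c2 - 1) := by
  obtain ⟨d, rfl⟩ : ∃ d, c2 = d + 1 := ⟨c2 - 1, by omega⟩
  have hsum : ∀ p ∈ leafSeqs c1 (d + 1) 0, p.1 + p.2 = c1 + (d + 1) := fun p hp => by
    simpa using fst_add_snd_of_mem_leafSeqs hp
  have hcount : ∀ i ≤ c1, (leafSeqs c1 (d + 1) 0).count (i, c1 + (d + 1) - i)
      = (c1 + (d + 1) - 1 - i).choose (d + 1 - 1) := fun i hi => by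
    rw [← Multiset.count_map_fst_eq_count_of_fst_add_snd hsum, count_map_fst_leafSeqs hi]
    congr 1
  refine ⟨hcount, ?_⟩
  rw [← Multiset.card_map Prod.fst, ← Multiset.sum_count_eq_card (s := Finset.range (c1 + 1))]
  · refine Finset.sum_congr rfl fun i hi => ?_
    rw [Multiset.count_map_fst_eq_count_of_fst_add_snd hsum,
      hcount i (Finset.mem_range_succ_iff.mp hi)]
  · simp only [Multiset.mem_map, Finset.mem_range_succ_iff]
    rintro _ ⟨p, hp, rfl⟩
    exact fst_le_of_mem_leafSeqs hp

/-- For the graph on `[3]` with `c_1 ≥ 1` edges `(1,2)` and `c_2 ≥ 1`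
edges `(2,3)`, the multiset of leaf indegree sequences of its reduction tree contains
`(i, c_1+c_2−i)` with multiplicity `C(c_1+c_2−1−i, c_2−1)` for each `0 ≤ i ≤ c_1`;
equivalently `∑_{i=0}^{c_1} C(c_1+c_2−1−i, c_2−1)` counts all the leaves. -/
theorem stmt14 (c1 c2 : ℕ) (h1 : 1 ≤ c1) (h2 : 1 ≤ c2) :
    (∀ i ≤ c1, (leafSeqs c1 c2 0).count (i, c1 + c2 - i)
      = Nat.choose (c1 + c2 - 1 - i) (c2 - 1)) ∧
    Multiset.card (leafSeqs c1 c2 0)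
      = ∑ i ∈ Finset.range (c1 + 1), Nat.choose (c1 + c2 - 1 - i) (c2 - 1) :=
  stmt14_general c1 c2 h2
end

section
/- The product formula identity: prod_{i=m+1}^{m+n-2} (1/(2i+1)) * binomial(m+n+i, 2i) = (prod_{p=1}^{n-2} C_p) * prod_{1 ≤ i < j ≤ n-1} (2(m+1)+i+j−1)/(i+j−1), where C_p is the p-th Catalan number. -/
/-! Induction on `n`. Passing from `n` to `n + 1`, the new top factor of the left side is
`C(2k+2, 2k)/(2k+1) = k + 1` with `k = m + n - 1`, and every old factor `C(a, 2i)` becomes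
`C(a+1, 2i) = C(a, 2i) (a+1)/(a+1-2i)`; the right side gains `C_{n-1}` and the new row `j = n`.
Both increments contain the rising product `(2m+n+2)⋯(2m+2n-1)`, and after cancelling it what
remains is `C_p (p+1)! = (p+1)(p+2)⋯(2p)` for `p = n - 1`. -/

open Finset Nat

theorem catalan_mul_factorial_succ (n : ℕ) : catalan n * (n + 1)! = (n + 1).ascFactorial n := by
  apply Nat.eq_of_mul_eq_mul_left n.factorial_pos
  rw [factorial_mul_ascFactorial, ← add_choose_mul_factorial_mul_factorial n n, ← two_mul,
    ← centralBinom_eq_two_mul_choose, ← succ_mul_catalan_eq_centralBinom, factorial_succ]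
  ring

section Field

variable {K : Type*} [Field K] [CharZero K]

theorem cast_choose_two_mul_add_two_div (k : ℕ) :
    ((2 * k + 2).choose (2 * k) : K) / (2 * k + 1) = k + 1 := by
  rw [Nat.choose_symm_add, cast_choose_two]
  have : (2 * k + 1 : K) ≠ 0 := by norm_cast
  push_cast
  field_simp
  ring

theorem cast_choose_succ_left {n k : ℕ} (h : k ≤ n) :
    ((n + 1).choose k : K) = n.choose k * (n + 1) / (n + 1 - k) := by
  have hsub : ((n + 1 - k : ℕ) : K) = n + 1 - k := by
    push_cast [Nat.cast_sub (by omega : k ≤ n + 1)]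
    ring
  have hk : (n + 1 - k : K) ≠ 0 := by rw [← hsub, Nat.cast_ne_zero]; omega
  have hmul := congrArg (Nat.cast : ℕ → K) (Nat.choose_mul_succ_eq n k)
  push_cast [hsub] at hmul
  rw [eq_div_iff hk, hmul]

theorem mul_prod_div_eq_catalan_mul_prod (x : K) (t : ℕ) :
    (x + t) * ∏ k ∈ range t, (x + k) / (t + 2 - k)
      = 2 * catalan (t + 1) * ∏ k ∈ range (t + 1), (x + k) / (t + 2 + k) := by
  have hdesc : ∏ k ∈ range t, ((t : K) + 2 - k) = (t + 2)! / 2 := by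
    have h := factorial_mul_descFactorial (show t ≤ t + 2 by omega)
    rw [descFactorial_eq_prod_range, show t + 2 - t = 2 by omega] at h
    rw [eq_div_iff two_ne_zero, ← h, Nat.cast_mul, Nat.cast_prod, mul_comm]
    congr 1
    refine prod_congr rfl fun k hk => ?_
    rw [Nat.cast_sub (by have := mem_range.mp hk; omega)]
    push_cast
    ring
  have hasc : ∏ k ∈ range (t + 1), ((t : K) + 2 + k) = catalan (t + 1) * (t + 2)! := by
    have h := catalan_mul_factorial_succ (t + 1)
    rw [ascFactorial_eq_prod_range] at h
    exact_mod_cast h.symm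
  rw [prod_div_distrib, prod_div_distrib, prod_range_succ (fun k => x + k), hdesc, hasc]
  have : ((t + 2)! : K) ≠ 0 := Nat.cast_ne_zero.mpr (factorial_ne_zero _)
  have : (catalan (t + 1) : K) ≠ 0 := Nat.cast_ne_zero.mpr fun h =>
    centralBinom_ne_zero (t + 1) (by rw [← succ_mul_catalan_eq_centralBinom, h, mul_zero])
  field_simp

end Field

theorem prod_Icc_choose_div_succ (m t : ℕ) :
    ∏ i ∈ Icc (m + 1) (m + t + 1), ((m + (t + 3) + i).choose (2 * i) : ℚ) / (2 * i + 1)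
      = (∏ i ∈ Icc (m + 1) (m + t), ((m + (t + 2) + i).choose (2 * i) : ℚ) / (2 * i + 1)) *
        ((m + t + 2) * ∏ k ∈ range t, (2 * m + t + 4 + k : ℚ) / (t + 2 - k)) := by
  have hmid : ∀ i ∈ Icc (m + 1) (m + t),
      ((m + (t + 3) + i).choose (2 * i) : ℚ) / (2 * i + 1)
        = ((m + (t + 2) + i).choose (2 * i) : ℚ) / (2 * i + 1) *
            ((m + t + 3 + i) / (m + t + 3 - i)) := by
    intro i hi
    rw [mem_Icc] at hi
    rw [show m + (t + 3) + i = m + (t + 2) + i + 1 by ring, cast_choose_succ_left (by omega)]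
    push_cast
    ring
  have hreindex : ∏ i ∈ Icc (m + 1) (m + t), ((m : ℚ) + t + 3 + i) / (m + t + 3 - i)
      = ∏ k ∈ range t, (2 * m + t + 4 + k : ℚ) / (t + 2 - k) := by
    rw [← Ico_add_one_right_eq_Icc, prod_Ico_eq_prod_range, show m + t + 1 - (m + 1) = t by omega]
    refine prod_congr rfl fun k _ => ?_
    push_cast
    ring
  rw [prod_Icc_succ_top (by omega), prod_congr rfl hmid, prod_mul_distrib, hreindex,
    show m + (t + 3) + (m + t + 1) = 2 * (m + t + 1) + 2 by ring, cast_choose_two_mul_add_two_div]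
  push_cast
  ring

theorem prod_catalan_mul_prod_Ico_succ (m t : ℕ) :
    (∏ p ∈ Icc 1 (t + 1), (catalan p : ℚ)) *
        ∏ j ∈ Icc 1 (t + 2), ∏ i ∈ Ico 1 j,
          (2 * ((m : ℚ) + 1) + i + j - 1) / ((i : ℚ) + j - 1)
      = ((∏ p ∈ Icc 1 t, (catalan p : ℚ)) *
          ∏ j ∈ Icc 1 (t + 1), ∏ i ∈ Ico 1 j,
            (2 * ((m : ℚ) + 1) + i + j - 1) / ((i : ℚ) + j - 1)) *
        (catalan (t + 1) * ∏ k ∈ range (t + 1), (2 * m + t + 4 + k : ℚ) / (t + 2 + k)) := by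
  rw [prod_Icc_succ_top (by omega), prod_Icc_succ_top (by omega : 1 ≤ t + 2),
    prod_Ico_eq_prod_range, show t + 2 - 1 = t + 1 by omega]
  have hinner : ∏ k ∈ range (t + 1),
      (2 * ((m : ℚ) + 1) + ((1 + k : ℕ) : ℚ) + ((t + 2 : ℕ) : ℚ) - 1) /
          (((1 + k : ℕ) : ℚ) + ((t + 2 : ℕ) : ℚ) - 1)
        = ∏ k ∈ range (t + 1), (2 * m + t + 4 + k : ℚ) / (t + 2 + k) := by
    refine prod_congr rfl fun k _ => ?_
    push_cast
    ring
  rw [hinner]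
  ring

/-- For `m ≥ 0`, `n ≥ 2`,
`∏_{i=m+1}^{m+n-2} (1/(2i+1)) C(m+n+i, 2i)
  = (∏_{p=1}^{n-2} C_p) * ∏_{1 ≤ i < j ≤ n-1} (2(m+1)+i+j−1)/(i+j−1)`. -/
theorem stmt17 (m n : ℕ) (hn : 2 ≤ n) :
    ∏ i ∈ Finset.Icc (m + 1) (m + n - 2),
        (Nat.choose (m + n + i) (2 * i) : ℚ) / (2 * i + 1)
      = (∏ p ∈ Finset.Icc 1 (n - 2), (catalan p : ℚ)) *
        ∏ j ∈ Finset.Icc 1 (n - 1), ∏ i ∈ Finset.Ico 1 j,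
          (2 * ((m : ℚ) + 1) + i + j - 1) / ((i : ℚ) + j - 1) := by
  obtain ⟨t, rfl⟩ : ∃ t, n = t + 2 := ⟨n - 2, by omega⟩
  simp only [show m + (t + 2) - 2 = m + t by omega, add_tsub_cancel_right,
    show t + 2 - 1 = t + 1 by omega]
  clear hn
  induction t with
  | zero => simp
  | succ t ih =>
    rw [← add_assoc, show t + 1 + 2 = t + 3 by ring, prod_Icc_choose_div_succ,
      prod_catalan_mul_prod_Ico_succ, ih]
    congr 1
    linear_combination mul_prod_div_eq_catalan_mul_prod (2 * m + t + 4 : ℚ) t / 2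
end
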